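/- Define, for n ∈ ℕ, the characteristics Q₁(n) = 1, Q₂(n) = (−1)^n, Q₃(n) = cos(nπ/2), Q₄(n) = sin(nπ/2), and for a sequence u : ℕ → ℝ define the pairing XᵢΦⱼ(n) = Σ_{k=0}^{3} Qᵢ(n+k)·(∂Φⱼ/∂u(n+k)), where Φ₁ = u(n)+u(n+1)+u(n+2)+u(n+3), Φ₂ = (−1)^n(−u(n)+u(n+1)−u(n+2)+u(n+3)), Φ₃ = sin(nπ/2)(u(n+2)−u(n))+cos(nπ/2)(u(n+3)−u(n+1)), Φ₄ = sin(nπ/2)(u(n+3)−u(n+1))−cos(nπ/2)(u(n+2)−u(n)) (so ∂Φⱼ/∂u(n+k) is the coefficient of u(n+k) in Φⱼ). Then for all n ∈ ℕ: X₁Φ₁ = 4, X₂Φ₂ = −4, X₃Φ₄ = 2, X₄Φ₃ = −2, and XᵢΦⱼ = 0 for every other pair (i,j) ∈ {1,2,3,4}² with (i,j) ∉ {(1,1),(2,2),(3,4),(4,3)}. -/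

import Mathlib

/-!
Shifting `n` by one flips `(-1)^n` and turns `(cos (nπ/2), sin (nπ/2))` by a quarter turn, so over
one period the characteristic vectors `(Qᵢ(n+k))ₖ` of `X₁, X₂, X₃, X₄` are the coefficient vectors
of `Φ₁, -Φ₂, Φ₄, -Φ₃`.
These coefficient vectors are orthogonal with squared lengths `4, 4, 2, 2`, so `XᵢΦⱼ` is a signed
entry of their Gram matrix.
-/

open Real

/-- The four symmetry characteristics of `u_{n+4} = u_n`:
`Q₁(n)=1`, `Q₂(n)=(−1)^n`, `Q₃(n)=cos(nπ/2)`, `Q₄(n)=sin(nπ/2)`. -/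
noncomputable def Q15 : Fin 4 → ℕ → ℝ
  | 0 => fun _ => 1
  | 1 => fun m => (-1 : ℝ) ^ m
  | 2 => fun m => Real.cos ((m : ℝ) * π / 2)
  | 3 => fun m => Real.sin ((m : ℝ) * π / 2)

/-- `coef15 j n k` is the coefficient `∂Φⱼ/∂u(n+k)` of `u(n+k)` in the first integral
`Φ₁ = u(n)+u(n+1)+u(n+2)+u(n+3)`, `Φ₂ = (−1)^n(−u(n)+u(n+1)−u(n+2)+u(n+3))`,
`Φ₃ = sin(nπ/2)(u(n+2)−u(n))+cos(nπ/2)(u(n+3)−u(n+1))`,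
`Φ₄ = sin(nπ/2)(u(n+3)−u(n+1))−cos(nπ/2)(u(n+2)−u(n))`. -/
noncomputable def coef15 : Fin 4 → ℕ → Fin 4 → ℝ
  | 0 => fun _ _ => 1
  | 1 => fun n k => (-1 : ℝ) ^ n * ![(-1 : ℝ), 1, -1, 1] k
  | 2 => fun n k =>
      ![-Real.sin ((n : ℝ) * π / 2), -Real.cos ((n : ℝ) * π / 2),
        Real.sin ((n : ℝ) * π / 2), Real.cos ((n : ℝ) * π / 2)] k
  | 3 => fun n k =>
      ![Real.cos ((n : ℝ) * π / 2), -Real.sin ((n : ℝ) * π / 2),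
        -Real.cos ((n : ℝ) * π / 2), Real.sin ((n : ℝ) * π / 2)] k

/-- The pairing `XᵢΦⱼ(n) = Σ_{k=0}^{3} Qᵢ(n+k)·∂Φⱼ/∂u(n+k)`. -/
noncomputable def pairing15 (i j : Fin 4) (n : ℕ) : ℝ :=
  ∑ k : Fin 4, Q15 i (n + (k : ℕ)) * coef15 j n k

lemma Q15_zero (m : ℕ) : Q15 0 m = 1 := rfl

lemma Q15_one_succ (m : ℕ) : Q15 1 (m + 1) = -Q15 1 m := by
  simp [Q15, pow_succ]

lemma Q15_two_succ (m : ℕ) : Q15 2 (m + 1) = -Q15 3 m := by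
  simp only [Q15, Nat.cast_succ]
  rw [show ((m : ℝ) + 1) * π / 2 = m * π / 2 + π / 2 by ring, cos_add_pi_div_two]

lemma Q15_three_succ (m : ℕ) : Q15 3 (m + 1) = Q15 2 m := by
  simp only [Q15, Nat.cast_succ]
  rw [show ((m : ℝ) + 1) * π / 2 = m * π / 2 + π / 2 by ring, sin_add_pi_div_two]

lemma Q15_add_eq_smul_coef15 (i : Fin 4) (n : ℕ) :
    (fun k : Fin 4 => Q15 i (n + k)) = ![(1 : ℝ), -1, 1, -1] i • coef15 (Equiv.swap 2 3 i) n := by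
  have h2 : n + 2 = n + 1 + 1 := rfl
  have h3 : n + 3 = n + 1 + 1 + 1 := rfl
  funext k
  fin_cases i <;> fin_cases k <;>
    simp only [Fin.isValue, Fin.reduceFinMk, add_zero, h2, h3, Q15_zero, Q15_one_succ,
      Q15_two_succ, Q15_three_succ, neg_neg] <;>
    simp [coef15, Q15, Equiv.swap_apply_of_ne_of_ne]

lemma pairing15_eq_mul_dotProduct (i j : Fin 4) (n : ℕ) :
    pairing15 i j n = ![(1 : ℝ), -1, 1, -1] i * (coef15 (Equiv.swap 2 3 i) n ⬝ᵥ coef15 j n) := by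
  rw [← smul_eq_mul, ← smul_dotProduct, ← Q15_add_eq_smul_coef15]
  rfl

lemma coef15_dotProduct_coef15 (j j' : Fin 4) (n : ℕ) :
    coef15 j n ⬝ᵥ coef15 j' n = if j = j' then ![4, 4, 2, 2] j else 0 := by
  have hsc := sin_sq_add_cos_sq ((n : ℝ) * π / 2)
  have he : ((-1 : ℝ) ^ n) ^ 2 = 1 := by rw [← pow_mul, pow_mul']; simp
  fin_cases j <;> fin_cases j' <;> simp [coef15, dotProduct, Fin.sum_univ_four] <;>
    first | ring1 | linear_combination 4 * he | linear_combination 2 * hsc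

/-- `X₁Φ₁ = 4`, `X₂Φ₂ = −4`, `X₃Φ₄ = 2`, `X₄Φ₃ = −2`, and `XᵢΦⱼ = 0` for every other pair. -/
theorem stmt15 : ∀ n : ℕ,
    pairing15 0 0 n = 4 ∧ pairing15 1 1 n = -4 ∧
    pairing15 2 3 n = 2 ∧ pairing15 3 2 n = -2 ∧
    ∀ i j : Fin 4, (i, j) ∉ ({(0, 0), (1, 1), (2, 3), (3, 2)} : Set (Fin 4 × Fin 4)) →
      pairing15 i j n = 0 := by
  intro n
  simp only [pairing15_eq_mul_dotProduct, coef15_dotProduct_coef15]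
  refine ⟨?_, ?_, ?_, ?_, fun i j hij => ?_⟩
  any_goals simp [Equiv.swap_apply_of_ne_of_ne]
  fin_cases i <;> fin_cases j <;> simp_all [Equiv.swap_apply_of_ne_of_ne]
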